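/- arXiv:2010.16182 — 3 statements merged into one kernel-verified Lean document; each statement's English description precedes it below -/
import Mathlib

section
/- For compact intervals A, B, C, the interval (A ⊖_gH C) ⊕ (C ⊖_gH B) is not strictly dominated by A ⊖_gH B, i.e., ¬( (A ⊖_gH C) ⊕ (C ⊖_gH B) ≺ A ⊖_gH B ). -/
/-- gH-difference of compact intervals represented as pairs of endpoints. -/
def gHdiff (A B : ℝ × ℝ) : ℝ × ℝ :=
  (min (A.1 - B.1) (A.2 - B.2), max (A.1 - B.1) (A.2 - B.2))

/-- Componentwise addition of intervals. -/
def ivAdd (A B : ℝ × ℝ) : ℝ × ℝ := (A.1 + B.1, A.2 + B.2)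

/-- `sdom X Y` : `Y` is strictly dominated by `X` (written `X ≺ Y`). -/
def sdom (X Y : ℝ × ℝ) : Prop :=
  (X.1 ≤ Y.1 ∧ X.2 < Y.2) ∨ (X.1 < Y.1 ∧ X.2 ≤ Y.2)

theorem gH_triangle_not_strict_dominated (A B C : ℝ × ℝ)
    (hA : A.1 ≤ A.2) (hB : B.1 ≤ B.2) (hC : C.1 ≤ C.2) :
    ¬ sdom (ivAdd (gHdiff A C) (gHdiff C B)) (gHdiff A B) := by
  simp only [sdom, ivAdd, gHdiff]
  rcases le_total (A.1 - C.1) (A.2 - C.2) with h1 | h1 <;>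
  rcases le_total (C.1 - B.1) (C.2 - B.2) with h2 | h2 <;>
  rcases le_total (A.1 - B.1) (A.2 - B.2) with h3 | h3 <;>
  simp_all [min_def, max_def] <;>
  first
  | (constructor <;> intro h <;> linarith)
  | (intro h <;> constructor <;> intros <;> linarith)
end

section
/- For compact intervals A, B, C, D, the norm of (A ⊖_gH B) ⊖_gH (C ⊖_gH D) is at most ‖A ⊖_gH C‖ + ‖B ⊖_gH D‖. -/
/-- Norm of an interval `[p, q]` : `max |p| |q|`. -/
def ivNorm (A : ℝ × ℝ) : ℝ := max |A.1| |A.2|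

/-!
On `ℝ × ℝ` with its sup norm, `ivNorm` is the norm and `A ⊖_gH B` is the endpoint difference
`A - B` with its coordinates sorted. Sorting preserves the sup norm and is 1-Lipschitz, so
`‖(A ⊖_gH B) - (C ⊖_gH D)‖ ≤ ‖(A - B) - (C - D)‖ = ‖(A - C) - (B - D)‖ ≤ ‖A - C‖ + ‖B - D‖`.
-/

def sortPair (p : ℝ × ℝ) : ℝ × ℝ := (min p.1 p.2, max p.1 p.2)

lemma gHdiff_eq_sortPair_sub (A B : ℝ × ℝ) : gHdiff A B = sortPair (A - B) := rfl

lemma ivNorm_eq_norm (A : ℝ × ℝ) : ivNorm A = ‖A‖ := by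
  simp only [ivNorm, Prod.norm_def, Real.norm_eq_abs]

lemma norm_sortPair (p : ℝ × ℝ) : ‖sortPair p‖ = ‖p‖ := by
  simp only [sortPair, Prod.norm_def, Real.norm_eq_abs]
  rcases le_total p.1 p.2 with h | h
  · rw [min_eq_left h, max_eq_right h, max_comm]
  · rw [min_eq_right h, max_eq_left h, max_comm]

lemma norm_sortPair_sub_le (p q : ℝ × ℝ) : ‖sortPair p - sortPair q‖ ≤ ‖p - q‖ := by
  simp only [sortPair, Prod.norm_def, Prod.fst_sub, Prod.snd_sub, Real.norm_eq_abs]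
  exact max_le (abs_min_sub_min_le_max _ _ _ _) (abs_max_sub_max_le_max _ _ _ _)

lemma ivNorm_gHdiff (A B : ℝ × ℝ) : ivNorm (gHdiff A B) = ‖A - B‖ := by
  rw [ivNorm_eq_norm, gHdiff_eq_sortPair_sub, norm_sortPair]

theorem gHdiff_norm_triangle_general (A B C D : ℝ × ℝ) :
    ivNorm (gHdiff (gHdiff A B) (gHdiff C D)) ≤ ivNorm (gHdiff A C) + ivNorm (gHdiff B D) := by
  rw [ivNorm_gHdiff, ivNorm_gHdiff, ivNorm_gHdiff, gHdiff_eq_sortPair_sub, gHdiff_eq_sortPair_sub]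
  calc ‖sortPair (A - B) - sortPair (C - D)‖ ≤ ‖(A - B) - (C - D)‖ := norm_sortPair_sub_le _ _
    _ = ‖(A - C) - (B - D)‖ := by congr 1; abel
    _ ≤ ‖A - C‖ + ‖B - D‖ := norm_sub_le _ _

theorem gHdiff_norm_triangle (A B C D : ℝ × ℝ)
    (hA : A.1 ≤ A.2) (hB : B.1 ≤ B.2) (hC : C.1 ≤ C.2) (hD : D.1 ≤ D.2) :
    ivNorm (gHdiff (gHdiff A B) (gHdiff C D)) ≤ ivNorm (gHdiff A C) + ivNorm (gHdiff B D) :=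
  gHdiff_norm_triangle_general A B C D
end

section
/- The interval-valued function F(x) = |x| ⊙ [-3, 2] on ℝ, i.e., F(x) = [-3|x|, 2|x|], satisfies F(λx) = λ ⊙ F(x) for all λ ≥ 0 and ¬(F(x) ⊕ F(y) ≺ F(x+y)) for all x, y (sublinearity), but F is not a convex IVF, since the lower endpoint x ↦ -3|x| is not a convex function on ℝ. -/
/-! The upper endpoint `2|x|` is subadditive, so `F x ⊕ F y` can never lie strictly below
`F (x + y)` in the upper endpoint; equality there forces `|x + y| = |x| + |y|`, and then
`F x ⊕ F y = F (x + y)`, which `≺` excludes. The lower endpoint `-3|x|` is concave and not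
affine, hence not convex. -/

theorem sdom.snd_le {X Y : ℝ × ℝ} (h : sdom X Y) : X.2 ≤ Y.2 := by
  rcases h with ⟨-, h⟩ | ⟨-, h⟩
  · exact h.le
  · exact h

theorem sdom_irrefl (X : ℝ × ℝ) : ¬ sdom X X := by
  rintro (⟨-, h⟩ | ⟨h, -⟩) <;> exact lt_irrefl _ h

theorem smul_abs_mul_of_nonneg (a b : ℝ) {l : ℝ} (hl : 0 ≤ l) (x : ℝ) :
    (a * |l * x|, b * |l * x|) = (l * (a * |x|), l * (b * |x|)) := by
  rw [abs_mul, abs_of_nonneg hl, Prod.mk.injEq]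
  constructor <;> ring

theorem not_sdom_ivAdd_mul_abs (a : ℝ) {b : ℝ} (hb : 0 < b) (x y : ℝ) :
    ¬ sdom (ivAdd (a * |x|, b * |x|) (a * |y|, b * |y|)) (a * |x + y|, b * |x + y|) := by
  intro h
  have hle : b * (|x| + |y|) ≤ b * |x + y| := by
    simpa only [ivAdd, mul_add] using h.snd_le
  have heq : |x + y| = |x| + |y| :=
    le_antisymm (abs_add_le x y) (le_of_mul_le_mul_left hle hb)
  have hsum : ivAdd (a * |x|, b * |x|) (a * |y|, b * |y|) = (a * |x + y|, b * |x + y|) := by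
    simp only [ivAdd, heq, mul_add]
  exact sdom_irrefl _ (hsum ▸ h)

theorem not_convexOn_mul_abs {a : ℝ} (ha : a < 0) :
    ¬ ConvexOn ℝ Set.univ (fun x : ℝ => a * |x|) := by
  intro h
  have hmid := h.2 (Set.mem_univ (-1 : ℝ)) (Set.mem_univ 1)
    (by norm_num : (0 : ℝ) ≤ 1 / 2) (by norm_num : (0 : ℝ) ≤ 1 / 2) (by norm_num)
  norm_num at hmid
  linarith

theorem sublinear_not_convex_example :
    (∀ l : ℝ, 0 ≤ l → ∀ x : ℝ,
        ((-3) * |l * x|, 2 * |l * x|) = (l * ((-3) * |x|), l * (2 * |x|))) ∧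
    (∀ x y : ℝ,
        ¬ sdom (ivAdd ((-3) * |x|, 2 * |x|) ((-3) * |y|, 2 * |y|))
               ((-3) * |x + y|, 2 * |x + y|)) ∧
    ¬ ConvexOn ℝ Set.univ (fun x : ℝ => (-3) * |x|) :=
  ⟨fun _ hl x => smul_abs_mul_of_nonneg _ _ hl x,
    not_sdom_ivAdd_mul_abs _ (by norm_num),
    not_convexOn_mul_abs (by norm_num)⟩
end
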